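/- For every subset S ⊆ R_Θ⁺ and every X ∈ 𝔪^ℂ, the partial codifferential Σ_{β ∈ S} [ (∇_{V_β} Ω)(V_β, X) + (∇_{J V_β} Ω)(J V_β, X) ] vanishes; in particular, for a holomorphic submanifold whose normal space is spanned by {V_α, J V_α : α ∈ R_Θ⁺ ∖ S}, the normal-codifferential 𝛿̄̄Ω and the tangent codifferential 𝛿̄Ω both vanish on 𝔪^ℂ, so the submanifold is almost semi-Kähler and minimal. -/

import Mathlib

/-!
Each summand vanishes separately. Writing `a = X_β`, `b = X_{-β}`, one has `J(a - b) = e (a + b)`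
and `J(a + b) = e (a - b)` with `e = i ε_β`, and `π_𝔪[a + b, a - b] = -2 π_𝔪 H_β = 0`. For `u ∈ 𝔪^ℂ`
the defining identity of `U` (with `y = z = u`) gives `g(u, ∇(u, ·)) = 0`, and skewness of `J`
then reduces `(∇_u Ω)(u, x)` to `g(J u, ∇(u, x))`. When `J u = e v` with `π_𝔪[v, u] = 0`, the
identity of `U` with `z = v` turns this into `e/2 (g(u, π_𝔪[v, x]) - g(v, π_𝔪[u, x]))`, which
vanishes for `{u, v} = {a - b, a + b}` because `g(X_β, π_𝔪[X_{-β}, 𝔪^ℂ]) = 0`: the bracket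
`[X_{-β}, X_γ]` never has a `𝔤_{-β}` component, since `γ ≠ 0`.
-/

open Submodule

theorem Submodule.apply_mem_of_mem_span_span {R M N P : Type*} [CommSemiring R]
    [AddCommMonoid M] [AddCommMonoid N] [AddCommMonoid P] [Module R M] [Module R N] [Module R P]
    (f : M →ₗ[R] N →ₗ[R] P) {s : Set M} {t : Set N} {p : Submodule R P}
    (h : ∀ a ∈ s, ∀ b ∈ t, f a b ∈ p) {m : M} {n : N} (hm : m ∈ span R s)
    (hn : n ∈ span R t) : f m n ∈ p :=
  map₂_le.mp ((map₂_span_span R f s t).trans_le (span_le.mpr (Set.image2_subset_iff.mpr h)))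
    m hm n hn

theorem Submodule.apply_mem_span_of_eigen {R M ι : Type*} [CommSemiring R] [AddCommMonoid M]
    [Module R M] {f : M →ₗ[R] M} {X : ι → M} {s : Set ι} {c : ι → R}
    (hf : ∀ i ∈ s, f (X i) = c i • X i) {v : M} (hv : v ∈ span R (X '' s)) :
    f v ∈ span R (X '' s) := by
  refine (span_le (p := (span R (X '' s)).comap f)).mpr ?_ hv
  rintro _ ⟨i, hi, rfl⟩
  rw [SetLike.mem_coe, mem_comap, hf i hi]
  exact smul_mem _ _ (subset_span ⟨i, hi, rfl⟩)

section

variable {L : Type*} [LieRing L] [LieAlgebra ℂ L]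

noncomputable def connection (πm : L →ₗ[ℂ] L) (U : L →ₗ[ℂ] L →ₗ[ℂ] L) (x y : L) : L :=
  -(1 / 2 : ℂ) • πm ⁅x, y⁆ + U x y

/-- `(∇_x Ω)(y, z)` for the Kähler form `Ω(y, z) = g(y, J z)`. -/
def covDerivKahlerForm (g : L →ₗ[ℂ] L →ₗ[ℂ] ℂ) (J : L →ₗ[ℂ] L) (nab : L → L → L)
    (x y z : L) : ℂ :=
  g y (nab x (J z) - J (nab x z))

section Connection

variable {M : Submodule ℂ L} {πm : L →ₗ[ℂ] L} {U : L →ₗ[ℂ] L →ₗ[ℂ] L}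
  {g : L →ₗ[ℂ] L →ₗ[ℂ] ℂ} {J : L →ₗ[ℂ] L}

theorem connection_smul_left (r : ℂ) (u w : L) :
    connection πm U (r • u) w = r • connection πm U u w := by
  simp only [connection, smul_lie, map_smul, LinearMap.smul_apply, smul_add, smul_comm r]

theorem covDerivKahlerForm_smul_self (r : ℂ) (u x : L) :
    covDerivKahlerForm g J (connection πm U) (r • u) (r • u) x =
      r ^ 2 * covDerivKahlerForm g J (connection πm U) u u x := by
  simp only [covDerivKahlerForm, connection_smul_left, map_smul, ← smul_sub,
    LinearMap.smul_apply, smul_eq_mul]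
  ring

theorem connection_mem (hπ : ∀ u ∈ M, ∀ v ∈ M, πm ⁅u, v⁆ ∈ M) (hUmem : ∀ x y, U x y ∈ M)
    {u w : L} (hu : u ∈ M) (hw : w ∈ M) : connection πm U u w ∈ M :=
  add_mem (smul_mem _ _ (hπ u hu w hw)) (hUmem u w)

theorem apply_connection_self (hgsym : ∀ x y, g x y = g y x)
    (hU : ∀ x ∈ M, ∀ y ∈ M, ∀ z ∈ M, 2 * g (U x y) z = g (πm ⁅z, x⁆) y + g x (πm ⁅z, y⁆))
    {w z : L} (hw : w ∈ M) (hz : z ∈ M) : g w (connection πm U w z) = 0 := by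
  have h := hU w hw z hz w hw
  rw [lie_self, map_zero, map_zero, LinearMap.zero_apply, zero_add, hgsym] at h
  rw [connection, map_add, map_smul, smul_eq_mul]
  linear_combination (1 / 2 : ℂ) * h

theorem covDerivKahlerForm_self (hgsym : ∀ x y, g x y = g y x)
    (hU : ∀ x ∈ M, ∀ y ∈ M, ∀ z ∈ M, 2 * g (U x y) z = g (πm ⁅z, x⁆) y + g x (πm ⁅z, y⁆))
    (hπ : ∀ u ∈ M, ∀ v ∈ M, πm ⁅u, v⁆ ∈ M) (hUmem : ∀ x y, U x y ∈ M)
    (hJM : ∀ v ∈ M, J v ∈ M) (hskew : ∀ u ∈ M, ∀ v ∈ M, g u (J v) = -g (J u) v)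
    {u x : L} (hu : u ∈ M) (hx : x ∈ M) :
    covDerivKahlerForm g J (connection πm U) u u x = g (J u) (connection πm U u x) := by
  rw [covDerivKahlerForm, map_sub, apply_connection_self hgsym hU hu (hJM x hx),
    hskew u hu _ (connection_mem hπ hUmem hu hx), sub_neg_eq_add, zero_add]

theorem covDerivKahlerForm_self_eq_zero (hgsym : ∀ x y, g x y = g y x)
    (hU : ∀ x ∈ M, ∀ y ∈ M, ∀ z ∈ M, 2 * g (U x y) z = g (πm ⁅z, x⁆) y + g x (πm ⁅z, y⁆))
    (hπ : ∀ u ∈ M, ∀ v ∈ M, πm ⁅u, v⁆ ∈ M) (hUmem : ∀ x y, U x y ∈ M)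
    (hJM : ∀ v ∈ M, J v ∈ M) (hskew : ∀ u ∈ M, ∀ v ∈ M, g u (J v) = -g (J u) v)
    {u v x : L} {e : ℂ} (hu : u ∈ M) (hv : v ∈ M) (hx : x ∈ M) (hJu : J u = e • v)
    (hvu : πm ⁅v, u⁆ = 0) (hsymm : g u (πm ⁅v, x⁆) = g v (πm ⁅u, x⁆)) :
    covDerivKahlerForm g J (connection πm U) u u x = 0 := by
  have h := hU u hu x hx v hv
  rw [hvu, map_zero, LinearMap.zero_apply, zero_add, hsymm, hgsym] at h
  rw [covDerivKahlerForm_self hgsym hU hπ hUmem hJM hskew hu hx, hJu, connection]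
  simp only [map_smul, map_add, LinearMap.smul_apply, smul_eq_mul]
  linear_combination (e / 2) * h

theorem covDerivKahlerForm_pair_eq_zero (hgsym : ∀ x y, g x y = g y x)
    (hU : ∀ x ∈ M, ∀ y ∈ M, ∀ z ∈ M, 2 * g (U x y) z = g (πm ⁅z, x⁆) y + g x (πm ⁅z, y⁆))
    (hπ : ∀ u ∈ M, ∀ v ∈ M, πm ⁅u, v⁆ ∈ M) (hUmem : ∀ x y, U x y ∈ M)
    (hJM : ∀ v ∈ M, J v ∈ M) (hskew : ∀ u ∈ M, ∀ v ∈ M, g u (J v) = -g (J u) v)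
    {a b x : L} {e : ℂ} (ha : a ∈ M) (hb : b ∈ M) (hx : x ∈ M)
    (hJa : J a = e • a) (hJb : J b = (-e) • b) (hab : πm ⁅a, b⁆ = 0)
    (hax : g a (πm ⁅b, x⁆) = 0) (hbx : g b (πm ⁅a, x⁆) = 0) (c : ℂ) :
    covDerivKahlerForm g J (connection πm U) (c • (a - b)) (c • (a - b)) x +
      covDerivKahlerForm g J (connection πm U) (J (c • (a - b))) (J (c • (a - b))) x = 0 := by
  have hJsub : J (a - b) = e • (a + b) := by
    rw [map_sub, hJa, hJb, neg_smul, sub_neg_eq_add, smul_add]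
  have hJadd : J (a + b) = e • (a - b) := by
    rw [map_add, hJa, hJb, neg_smul, ← sub_eq_add_neg, smul_sub]
  have hcomm : πm ⁅a + b, a - b⁆ = 0 := by
    have hba : πm ⁅b, a⁆ = 0 := by rw [← lie_skew, map_neg, hab, neg_zero]
    simp only [add_lie, lie_sub, lie_self, map_add, map_sub, map_zero, hab, hba, sub_zero,
      add_zero]
  have hsymm : g (a - b) (πm ⁅a + b, x⁆) = g (a + b) (πm ⁅a - b, x⁆) := by
    simp only [add_lie, sub_lie, map_add, map_sub, LinearMap.add_apply, LinearMap.sub_apply]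
    linear_combination 2 * hax - 2 * hbx
  have hsub := covDerivKahlerForm_self_eq_zero hgsym hU hπ hUmem hJM hskew (sub_mem ha hb)
    (add_mem ha hb) hx hJsub hcomm hsymm
  have hadd := covDerivKahlerForm_self_eq_zero hgsym hU hπ hUmem hJM hskew (add_mem ha hb)
    (sub_mem ha hb) hx hJadd (by rw [← lie_skew, map_neg, hcomm, neg_zero]) hsymm.symm
  rw [map_smul, hJsub, smul_smul, covDerivKahlerForm_smul_self, covDerivKahlerForm_smul_self,
    hsub, hadd, mul_zero, mul_zero, add_zero]

end Connection

section WeylBasis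

variable {V : Type*} [AddCommGroup V] {R RΘ RΘc : Finset V} {X H : V → L}
  {n : V → V → ℝ} {πm : L →ₗ[ℂ] L} {g : L →ₗ[ℂ] L →ₗ[ℂ] ℂ} {J : L →ₗ[ℂ] L}

theorem neg_mem_of_mem_compl {Θ : Set V} (hRneg : ∀ α ∈ R, -α ∈ R)
    (hRΘ : ∀ α, α ∈ RΘ ↔ α ∈ R ∧ α ∈ AddSubgroup.closure Θ)
    (hRΘc : ∀ α, α ∈ RΘc ↔ α ∈ R ∧ α ∉ RΘ) {α : V} (hα : α ∈ RΘc) : -α ∈ RΘc := by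
  obtain ⟨hαR, hαΘ⟩ := (hRΘc α).1 hα
  refine (hRΘc (-α)).2 ⟨hRneg α hαR, fun h => hαΘ ((hRΘ α).2 ⟨hαR, ?_⟩)⟩
  simpa using neg_mem ((hRΘ (-α)).1 h).2

variable [DecidableEq V]

theorem apply_almostComplex_eq_neg {s : Set V} {lam eps : V → ℝ}
    (hg : ∀ α ∈ s, ∀ β ∈ s, g (X α) (X β) = if β = -α then (lam α : ℂ) else 0)
    (hJ : ∀ α ∈ s, J (X α) = (Complex.I * (eps α : ℂ)) • X α)
    (heps2 : ∀ α : V, eps (-α) = -eps α) {u v : L} (hu : u ∈ span ℂ (X '' s))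
    (hv : v ∈ span ℂ (X '' s)) : g u (J v) = -g (J u) v := by
  rw [eq_neg_iff_add_eq_zero, ← mem_bot ℂ]
  refine apply_mem_of_mem_span_span (g.compl₂ J + g.comp J) ?_ hu hv
  rintro _ ⟨α, hα, rfl⟩ _ ⟨β, hβ, rfl⟩
  simp only [LinearMap.add_apply, LinearMap.compl₂_apply, LinearMap.comp_apply, hJ α hα,
    hJ β hβ, map_smul, LinearMap.smul_apply, hg α hα β hβ, smul_eq_mul, mem_bot]
  split_ifs with h
  · rw [h, heps2]; push_cast; ring
  · ring

theorem proj_lie_basis_eq (hR0 : (0 : V) ∉ R) (hbH : ∀ α ∈ R, ⁅X α, X (-α)⁆ = H α)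
    (hbR : ∀ α ∈ R, ∀ β ∈ R, α + β ∈ R → ⁅X α, X β⁆ = (n α β : ℂ) • X (α + β))
    (hb0 : ∀ α ∈ R, ∀ β ∈ R, α + β ∉ R → α + β ≠ 0 → ⁅X α, X β⁆ = (0 : L))
    (hπm1 : ∀ α ∈ RΘc, πm (X α) = X α) (hπm2 : ∀ α ∈ RΘ, πm (X α) = 0)
    (hπm3 : ∀ α ∈ R, πm (H α) = 0) (hRΘc : ∀ α, α ∈ RΘc ↔ α ∈ R ∧ α ∉ RΘ)
    {α γ : V} (hα : α ∈ R) (hγ : γ ∈ R) :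
    πm ⁅X α, X γ⁆ = if α + γ ∈ RΘc then (n α γ : ℂ) • X (α + γ) else 0 := by
  by_cases h0 : α + γ = 0
  · have hc : α + γ ∉ RΘc := fun h => hR0 (h0 ▸ ((hRΘc _).1 h).1)
    rw [if_neg hc, eq_neg_of_add_eq_zero_right h0, hbH α hα, hπm3 α hα]
  by_cases hmem : α + γ ∈ R
  · rw [hbR α hα γ hγ hmem, map_smul]
    split_ifs with hc
    · rw [hπm1 _ hc]
    · rw [hπm2 _ (by simpa [hmem] using (hRΘc _).not.1 hc), smul_zero]
  · rw [hb0 α hα γ hγ hmem h0, map_zero, if_neg fun h => hmem ((hRΘc _).1 h).1]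

theorem proj_lie_mem_span (hR0 : (0 : V) ∉ R) (hbH : ∀ α ∈ R, ⁅X α, X (-α)⁆ = H α)
    (hbR : ∀ α ∈ R, ∀ β ∈ R, α + β ∈ R → ⁅X α, X β⁆ = (n α β : ℂ) • X (α + β))
    (hb0 : ∀ α ∈ R, ∀ β ∈ R, α + β ∉ R → α + β ≠ 0 → ⁅X α, X β⁆ = (0 : L))
    (hπm1 : ∀ α ∈ RΘc, πm (X α) = X α) (hπm2 : ∀ α ∈ RΘ, πm (X α) = 0)
    (hπm3 : ∀ α ∈ R, πm (H α) = 0) (hRΘc : ∀ α, α ∈ RΘc ↔ α ∈ R ∧ α ∉ RΘ) :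
    ∀ u ∈ span ℂ (X '' (RΘc : Set V)), ∀ v ∈ span ℂ (X '' (RΘc : Set V)),
      πm ⁅u, v⁆ ∈ span ℂ (X '' (RΘc : Set V)) := by
  intro u hu v hv
  refine apply_mem_of_mem_span_span ((LieAlgebra.ad ℂ L : L →ₗ[ℂ] Module.End ℂ L).compr₂ πm)
    ?_ hu hv
  rintro _ ⟨α, hα, rfl⟩ _ ⟨γ, hγ, rfl⟩
  change πm ⁅X α, X γ⁆ ∈ _
  rw [proj_lie_basis_eq hR0 hbH hbR hb0 hπm1 hπm2 hπm3 hRΘc ((hRΘc α).1 hα).1 ((hRΘc γ).1 hγ).1]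
  split_ifs with hc
  · exact smul_mem _ _ (subset_span ⟨_, hc, rfl⟩)
  · exact zero_mem _

theorem apply_proj_lie_eq_zero (hR0 : (0 : V) ∉ R) (hbH : ∀ α ∈ R, ⁅X α, X (-α)⁆ = H α)
    (hbR : ∀ α ∈ R, ∀ β ∈ R, α + β ∈ R → ⁅X α, X β⁆ = (n α β : ℂ) • X (α + β))
    (hb0 : ∀ α ∈ R, ∀ β ∈ R, α + β ∉ R → α + β ≠ 0 → ⁅X α, X β⁆ = (0 : L))
    (hπm1 : ∀ α ∈ RΘc, πm (X α) = X α) (hπm2 : ∀ α ∈ RΘ, πm (X α) = 0)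
    (hπm3 : ∀ α ∈ R, πm (H α) = 0) (hRΘc : ∀ α, α ∈ RΘc ↔ α ∈ R ∧ α ∉ RΘ) {lam : V → ℝ}
    (hg : ∀ α ∈ RΘc, ∀ β ∈ RΘc, g (X α) (X β) = if β = -α then (lam α : ℂ) else 0)
    {α β : V} (hα : α ∈ RΘc) (hβ : β ∈ R) (hαβ : α + β = 0) {y : L}
    (hy : y ∈ span ℂ (X '' (RΘc : Set V))) : g (X α) (πm ⁅X β, y⁆) = 0 := by
  refine (span_le (p := LinearMap.ker ((g (X α)).comp (πm.comp (LieAlgebra.ad ℂ L (X β)))))).mpr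
    ?_ hy
  rintro _ ⟨γ, hγ, rfl⟩
  have hγR := ((hRΘc γ).1 hγ).1
  change g (X α) (πm ⁅X β, X γ⁆) = 0
  rw [proj_lie_basis_eq hR0 hbH hbR hb0 hπm1 hπm2 hπm3 hRΘc hβ hγR]
  split_ifs with hc
  · rw [map_smul, hg α hα _ hc, if_neg, smul_zero]
    rw [← eq_neg_of_add_eq_zero_right hαβ]
    exact fun h => hR0 (add_eq_left.mp h ▸ hγR)
  · exact map_zero _

end WeylBasis

end

theorem stmt16_general
    (L : Type*) [LieRing L] [LieAlgebra ℂ L]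
    (V : Type*) [AddCommGroup V] [DecidableEq V]
    (R : Finset V) (hR0 : (0 : V) ∉ R) (hRneg : ∀ α ∈ R, -α ∈ R)
    (Rpos : Finset V)
    (Θ : Finset V)
    (RΘ : Finset V)
    (hRΘ : ∀ α, α ∈ RΘ ↔ α ∈ R ∧ α ∈ AddSubgroup.closure (Θ : Set V))
    (RΘc : Finset V) (hRΘc : ∀ α, α ∈ RΘc ↔ α ∈ R ∧ α ∉ RΘ)
    (X H : V → L) (n : V → V → ℝ)
    (hbH : ∀ α ∈ R, ⁅X α, X (-α)⁆ = H α)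
    (hbR : ∀ α ∈ R, ∀ β ∈ R, α + β ∈ R → ⁅X α, X β⁆ = (n α β : ℂ) • X (α + β))
    (hb0 : ∀ α ∈ R, ∀ β ∈ R, α + β ∉ R → α + β ≠ 0 → ⁅X α, X β⁆ = (0 : L))
    (πm : L →ₗ[ℂ] L)
    (hπm1 : ∀ α ∈ RΘc, πm (X α) = X α)
    (hπm2 : ∀ α ∈ RΘ, πm (X α) = 0)
    (hπm3 : ∀ α ∈ R, πm (H α) = 0)
    (lam : V → ℝ)
    (g : L →ₗ[ℂ] L →ₗ[ℂ] ℂ) (hgsym : ∀ x y : L, g x y = g y x)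
    (hg : ∀ α ∈ RΘc, ∀ β ∈ RΘc, g (X α) (X β) = if β = -α then (lam α : ℂ) else 0)
    (U : L →ₗ[ℂ] L →ₗ[ℂ] L)
    (hUmem : ∀ x y : L, U x y ∈ Submodule.span ℂ (X '' (RΘc : Set V)))
    (hU : ∀ x ∈ Submodule.span ℂ (X '' (RΘc : Set V)),
          ∀ y ∈ Submodule.span ℂ (X '' (RΘc : Set V)),
          ∀ z ∈ Submodule.span ℂ (X '' (RΘc : Set V)),
      (2 : ℂ) * g (U x y) z = g (πm ⁅z, x⁆) y + g x (πm ⁅z, y⁆))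
    (eps : V → ℝ)
    (heps2 : ∀ α : V, eps (-α) = - eps α)
    (J : L →ₗ[ℂ] L)
    (hJ : ∀ α ∈ RΘc, J (X α) = (Complex.I * (eps α : ℂ)) • X α)
    (nab : L → L → L)
    (hnab : ∀ x y : L, nab x y = -(1/2 : ℂ) • πm ⁅x, y⁆ + U x y)
    (covOm : L → L → L → ℂ)
    (hcovOm : ∀ x y z : L, covOm x y z = g y (nab x (J z) - J (nab x z)))
    (Rcpos : Finset V) (hRcpos : ∀ α, α ∈ Rcpos ↔ α ∈ RΘc ∧ α ∈ Rpos)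
    (Vv : V → L)
    (hVv : ∀ α : V, Vv α = (((Real.sqrt (2 * lam α))⁻¹ : ℝ) : ℂ) • (X α - X (-α)))
    :
    ∀ S : Finset V, S ⊆ Rcpos →
      ∀ x ∈ Submodule.span ℂ (X '' (RΘc : Set V)),
        (∑ β ∈ S,
          (covOm (Vv β) (Vv β) x + covOm (J (Vv β)) (J (Vv β)) x) = 0) ∧
        (∑ β ∈ Rcpos \ S,
          (covOm (Vv β) (Vv β) x + covOm (J (Vv β)) (J (Vv β)) x) = 0) := by
  intro S hS x hx
  obtain rfl : nab = connection πm U := funext fun u => funext (hnab u)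
  have hcov : covOm = covDerivKahlerForm g J (connection πm U) :=
    funext fun u => funext fun v => funext (hcovOm u v)
  have horth {α γ : V} (hα : α ∈ RΘc) (hγ : γ ∈ R) (h : α + γ = 0) :
      g (X α) (πm ⁅X γ, x⁆) = 0 :=
    apply_proj_lie_eq_zero hR0 hbH hbR hb0 hπm1 hπm2 hπm3 hRΘc hg hα hγ h hx
  have hterm (β : V) (hβ : β ∈ Rcpos) :
      covOm (Vv β) (Vv β) x + covOm (J (Vv β)) (J (Vv β)) x = 0 := by
    obtain ⟨hβc, -⟩ := (hRcpos β).1 hβ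
    have hβR := ((hRΘc β).1 hβc).1
    have hnβc := neg_mem_of_mem_compl hRneg hRΘ hRΘc hβc
    have hJneg : J (X (-β)) = -(Complex.I * eps β) • X (-β) := by
      rw [hJ _ hnβc, heps2, Complex.ofReal_neg, mul_neg]
    rw [hcov, hVv]
    exact covDerivKahlerForm_pair_eq_zero hgsym hU
      (proj_lie_mem_span hR0 hbH hbR hb0 hπm1 hπm2 hπm3 hRΘc) hUmem
      (fun _ => apply_mem_span_of_eigen hJ)
      (fun _ hu _ hv => apply_almostComplex_eq_neg hg hJ heps2 hu hv)
      (subset_span ⟨β, hβc, rfl⟩) (subset_span ⟨-β, hnβc, rfl⟩) hx (hJ β hβc) hJneg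
      (by rw [hbH β hβR, hπm3 β hβR]) (horth hβc (hRneg β hβR) (add_neg_cancel β))
      (horth hnβc hβR (neg_add_cancel β)) _
  exact ⟨Finset.sum_eq_zero fun β hβ => hterm β (hS hβ),
    Finset.sum_eq_zero fun β hβ => hterm β (Finset.mem_sdiff.1 hβ).1⟩

theorem stmt16
    (L : Type*) [LieRing L] [LieAlgebra ℂ L]
    (V : Type*) [AddCommGroup V] [DecidableEq V]
    (R : Finset V) (hR0 : (0 : V) ∉ R) (hRneg : ∀ α ∈ R, -α ∈ R)
    (Rpos : Finset V) (hposR : Rpos ⊆ R)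
    (hposneg : ∀ α ∈ R, α ∈ Rpos ↔ -α ∉ Rpos)
    (Sig : Finset V) (hSigpos : Sig ⊆ Rpos)
    (Θ : Finset V) (hΘSig : Θ ⊆ Sig)
    (RΘ : Finset V)
    (hRΘ : ∀ α, α ∈ RΘ ↔ α ∈ R ∧ α ∈ AddSubgroup.closure (Θ : Set V))
    (RΘc : Finset V) (hRΘc : ∀ α, α ∈ RΘc ↔ α ∈ R ∧ α ∉ RΘ)
    (X H : V → L) (n : V → V → ℝ)
    (hbH : ∀ α ∈ R, ⁅X α, X (-α)⁆ = H α)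
    (hbR : ∀ α ∈ R, ∀ β ∈ R, α + β ∈ R → ⁅X α, X β⁆ = (n α β : ℂ) • X (α + β))
    (hb0 : ∀ α ∈ R, ∀ β ∈ R, α + β ∉ R → α + β ≠ 0 → ⁅X α, X β⁆ = (0 : L))
    (hn1 : ∀ α β : V, n α β = - n β α)
    (hn2 : ∀ α β : V, n α β = - n (-α) (-β))
    (hn3 : ∀ α β γ : V, α + β + γ = 0 → n α β = n β γ ∧ n β γ = n γ α)
    (πm : L →ₗ[ℂ] L)
    (hπm1 : ∀ α ∈ RΘc, πm (X α) = X α)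
    (hπm2 : ∀ α ∈ RΘ, πm (X α) = 0)
    (hπm3 : ∀ α ∈ R, πm (H α) = 0)
    (lam : V → ℝ) (hlam1 : ∀ α ∈ RΘc, 0 < lam α) (hlam2 : ∀ α : V, lam (-α) = lam α)
    (g : L →ₗ[ℂ] L →ₗ[ℂ] ℂ) (hgsym : ∀ x y : L, g x y = g y x)
    (hg : ∀ α ∈ RΘc, ∀ β ∈ RΘc, g (X α) (X β) = if β = -α then (lam α : ℂ) else 0)
    (hgnd : ∀ x ∈ Submodule.span ℂ (X '' (RΘc : Set V)),
      (∀ z ∈ Submodule.span ℂ (X '' (RΘc : Set V)), g x z = 0) → x = 0)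
    (U : L →ₗ[ℂ] L →ₗ[ℂ] L) (hUsym : ∀ x y : L, U x y = U y x)
    (hUmem : ∀ x y : L, U x y ∈ Submodule.span ℂ (X '' (RΘc : Set V)))
    (hU : ∀ x ∈ Submodule.span ℂ (X '' (RΘc : Set V)),
          ∀ y ∈ Submodule.span ℂ (X '' (RΘc : Set V)),
          ∀ z ∈ Submodule.span ℂ (X '' (RΘc : Set V)),
      (2 : ℂ) * g (U x y) z = g (πm ⁅z, x⁆) y + g x (πm ⁅z, y⁆))
    (eps : V → ℝ) (heps1 : ∀ α ∈ RΘc, eps α = 1 ∨ eps α = -1)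
    (heps2 : ∀ α : V, eps (-α) = - eps α)
    (J : L →ₗ[ℂ] L)
    (hJ : ∀ α ∈ RΘc, J (X α) = (Complex.I * (eps α : ℂ)) • X α)
    (nab : L → L → L)
    (hnab : ∀ x y : L, nab x y = -(1/2 : ℂ) • πm ⁅x, y⁆ + U x y)
    (covOm : L → L → L → ℂ)
    (hcovOm : ∀ x y z : L, covOm x y z = g y (nab x (J z) - J (nab x z)))
    (Rcpos : Finset V) (hRcpos : ∀ α, α ∈ Rcpos ↔ α ∈ RΘc ∧ α ∈ Rpos)
    (Vv : V → L)
    (hVv : ∀ α : V, Vv α = (((Real.sqrt (2 * lam α))⁻¹ : ℝ) : ℂ) • (X α - X (-α)))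
    :
    ∀ S : Finset V, S ⊆ Rcpos →
      ∀ x ∈ Submodule.span ℂ (X '' (RΘc : Set V)),
        (∑ β ∈ S,
          (covOm (Vv β) (Vv β) x + covOm (J (Vv β)) (J (Vv β)) x) = 0) ∧
        (∑ β ∈ Rcpos \ S,
          (covOm (Vv β) (Vv β) x + covOm (J (Vv β)) (J (Vv β)) x) = 0) :=
  stmt16_general L V R hR0 hRneg Rpos Θ RΘ hRΘ RΘc hRΘc X H n hbH hbR hb0 πm hπm1 hπm2 hπm3 lam g
    hgsym hg U hUmem hU eps heps2 J hJ nab hnab covOm hcovOm Rcpos hRcpos Vv hVv
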